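/- Let 1/3 < d_x < 1/2 and 1/3 < d_ε < 1/2. There exists a constant C (depending only on d_x, d_ε) such that for all integers n ≥ M ≥ 1: n^{−1} Σ_{p=−M}^{M} (|p|+1)^{2(d_x+d_ε−1)} Σ_{q=−M}^{M} (|q|+1)^{2(d_x+d_ε−1)} Σ_{r=−n+1}^{n−1} (|r|+1)^{2d_x−1} (|r+q−p|+1)^{2d_ε−1} ≤ C ( M^{4d_x+4d_ε−1} n^{−1} + M^{4d_x+4d_ε−2} n^{2d_x+2d_ε−2} ). -/

import Mathlib

/-! By `x ^ a * y ^ b ≤ x ^ (a + b) + y ^ (a + b)` (for `x, y > 0` and `a, b ≤ 0`) the inner sum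
over `r` splits into two sums of `(|t| + 1) ^ c`, `c = 2 d_x + 2 d_ε - 2 ∈ (-1, 0)`, over windows
inside `[-3n, 3n]`, so it is `O(n ^ (c + 1))` uniformly in `p, q`. Likewise each weight sum over
`[-M, M]` is `O(M ^ (c + 1))`, by comparison with the telescoping sum of
`(k + 1) ^ (c + 1) - k ^ (c + 1) ≥ (c + 1) (k + 1) ^ c`. Altogether the left side is
`O(n⁻¹ M ^ (2c + 2) n ^ (c + 1)) = O(M ^ (4 d_x + 4 d_ε - 2) n ^ (2 d_x + 2 d_ε - 2))`, the second
term of the bound. -/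

open Finset

theorem mul_add_one_rpow_le_add_one_rpow_sub_rpow {c k : ℝ} (hc0 : -1 ≤ c) (hc1 : c ≤ 0)
    (hk : 0 ≤ k) : (c + 1) * (k + 1) ^ c ≤ (k + 1) ^ (c + 1) - k ^ (c + 1) := by
  have hk1 : 0 < k + 1 := by linarith
  have hs : -1 ≤ -(k + 1)⁻¹ := neg_le_neg (inv_le_one_of_one_le₀ (by linarith))
  have bernoulli := rpow_one_add_le_one_add_mul_self hs (by linarith : 0 ≤ c + 1) (by linarith)
  have hratio : 1 + -(k + 1)⁻¹ = k / (k + 1) := by field_simp; ring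
  rw [hratio, Real.div_rpow hk hk1.le, div_le_iff₀ (by positivity),
    Real.rpow_add_one hk1.ne' c] at bernoulli
  have hexpand : (1 + (c + 1) * -(k + 1)⁻¹) * ((k + 1) ^ c * (k + 1))
      = (k + 1) ^ c * (k + 1) - (c + 1) * (k + 1) ^ c := by field_simp; ring
  rw [Real.rpow_add_one hk1.ne' c]
  linarith

theorem sum_range_add_one_rpow_le {c : ℝ} (hc0 : -1 < c) (hc1 : c ≤ 0) (N : ℕ) :
    ∑ k ∈ range N, ((k : ℝ) + 1) ^ c ≤ (N : ℝ) ^ (c + 1) / (c + 1) := by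
  have hc : 0 < c + 1 := by linarith
  rw [le_div_iff₀ hc, sum_mul]
  calc ∑ k ∈ range N, ((k : ℝ) + 1) ^ c * (c + 1)
      ≤ ∑ k ∈ range N, ((((k + 1 : ℕ) : ℝ)) ^ (c + 1) - ((k : ℕ) : ℝ) ^ (c + 1)) := by
        gcongr with k
        rw [mul_comm]; push_cast
        exact mul_add_one_rpow_le_add_one_rpow_sub_rpow hc0.le hc1 k.cast_nonneg
    _ = (N : ℝ) ^ (c + 1) := by
        rw [sum_range_sub (fun k : ℕ => (k : ℝ) ^ (c + 1)), Nat.cast_zero, Real.zero_rpow hc.ne',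
          sub_zero]

theorem sum_Icc_neg_le_two_mul_sum_range {g : ℤ → ℝ} (hg : ∀ t, 0 ≤ g t)
    (hg_neg : ∀ t, g (-t) = g t) (T : ℕ) :
    ∑ t ∈ Icc (-(T : ℤ)) T, g t ≤ 2 * ∑ k ∈ range (T + 1), g k := by
  set S := (range (T + 1)).image (Nat.cast : ℕ → ℤ)
  have hS : ∑ t ∈ S, g t = ∑ k ∈ range (T + 1), g k :=
    sum_image fun _ _ _ _ h => Nat.cast_injective h
  have hnegS : ∑ t ∈ S.image Neg.neg, g t = ∑ t ∈ S, g t := by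
    rw [sum_image fun _ _ _ _ h => neg_injective h]; simp only [hg_neg]
  calc ∑ t ∈ Icc (-(T : ℤ)) T, g t ≤ ∑ t ∈ S ∪ S.image Neg.neg, g t := by
        refine sum_le_sum_of_subset_of_nonneg (fun t ht => ?_) fun t _ _ => hg t
        simp only [S, mem_Icc, mem_union, mem_image, mem_range] at ht ⊢
        rcases le_total 0 t with h | h
        · exact Or.inl ⟨t.toNat, by omega, by omega⟩
        · exact Or.inr ⟨-t, ⟨(-t).toNat, by omega, by omega⟩, by omega⟩
    _ ≤ ∑ t ∈ S ∪ S.image Neg.neg, g t + ∑ t ∈ S ∩ S.image Neg.neg, g t :=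
        le_add_of_nonneg_right (sum_nonneg fun t _ => hg t)
    _ = 2 * ∑ k ∈ range (T + 1), g k := by rw [sum_union_inter, hnegS, hS, two_mul]

theorem rpow_mul_rpow_le_rpow_add_add_rpow_add {x y a b : ℝ} (hx : 0 < x) (hy : 0 < y)
    (ha : a ≤ 0) (hb : b ≤ 0) : x ^ a * y ^ b ≤ x ^ (a + b) + y ^ (a + b) := by
  rcases le_total x y with h | h
  · calc x ^ a * y ^ b ≤ x ^ a * x ^ b := by
          gcongr ?_ * ?_; exact Real.rpow_le_rpow_of_nonpos hx h hb
      _ ≤ x ^ (a + b) + y ^ (a + b) := by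
        rw [← Real.rpow_add hx]; exact le_add_of_nonneg_right (by positivity)
  · calc x ^ a * y ^ b ≤ y ^ a * y ^ b := by
          gcongr ?_ * ?_; exact Real.rpow_le_rpow_of_nonpos hy h ha
      _ ≤ x ^ (a + b) + y ^ (a + b) := by
        rw [← Real.rpow_add hy]; exact le_add_of_nonneg_left (by positivity)

theorem sum_mul_sum_mul_le_sq_sum_mul {ι : Type*} (s : Finset ι) (w : ι → ℝ) (F : ι → ι → ℝ)
    {K : ℝ} (hw : ∀ i ∈ s, 0 ≤ w i) (hF : ∀ i ∈ s, ∀ j ∈ s, F i j ≤ K) :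
    ∑ i ∈ s, w i * ∑ j ∈ s, w j * F i j ≤ (∑ i ∈ s, w i) ^ 2 * K := by
  calc ∑ i ∈ s, w i * ∑ j ∈ s, w j * F i j ≤ ∑ i ∈ s, w i * ∑ j ∈ s, w j * K := by
        refine sum_le_sum fun i hi => mul_le_mul_of_nonneg_left ?_ (hw i hi)
        exact sum_le_sum fun j hj => mul_le_mul_of_nonneg_left (hF i hi j hj) (hw j hj)
    _ = (∑ i ∈ s, w i) ^ 2 * K := by simp only [← sum_mul]; ring

theorem sum_Icc_abs_add_one_rpow_le {c : ℝ} (hc0 : -1 < c) (hc1 : c ≤ 0) {T : ℕ} (hT : 1 ≤ T) :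
    ∑ t ∈ Icc (-(T : ℤ)) T, ((|t| : ℝ) + 1) ^ c ≤ 4 / (c + 1) * (T : ℝ) ^ (c + 1) := by
  have hc : 0 < c + 1 := by linarith
  have hT' : (1 : ℝ) ≤ T := by exact_mod_cast hT
  calc ∑ t ∈ Icc (-(T : ℤ)) T, ((|t| : ℝ) + 1) ^ c
      ≤ 2 * ∑ k ∈ range (T + 1), ((k : ℝ) + 1) ^ c := by
        simpa using sum_Icc_neg_le_two_mul_sum_range (g := fun t : ℤ => ((|t| : ℝ) + 1) ^ c)
          (fun t => by positivity) (fun t => by simp) T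
    _ ≤ 2 * (((T + 1 : ℕ) : ℝ) ^ (c + 1) / (c + 1)) := by
        gcongr; exact sum_range_add_one_rpow_le hc0 hc1 _
    _ ≤ 2 * ((2 * T : ℝ) ^ (c + 1) / (c + 1)) := by gcongr; push_cast; linarith
    _ = 2 * 2 ^ (c + 1) / (c + 1) * (T : ℝ) ^ (c + 1) := by
        rw [Real.mul_rpow zero_le_two (Nat.cast_nonneg T)]; ring
    _ ≤ 4 / (c + 1) * (T : ℝ) ^ (c + 1) := by
        have : (2 : ℝ) ^ (c + 1) ≤ 2 := Real.rpow_le_self_of_one_le one_le_two (by linarith)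
        gcongr; linarith

theorem sum_Icc_abs_add_one_rpow_mul_abs_add_sub_le {a b : ℝ} (ha : a ≤ 0) (hb : b ≤ 0)
    (hab : -1 < a + b) {n : ℕ} (hn : 1 ≤ n) {p q : ℤ} (hp : |p| ≤ n) (hq : |q| ≤ n) :
    ∑ r ∈ Icc (-(n : ℤ) + 1) (n - 1), ((|r| : ℝ) + 1) ^ a * ((|r + q - p| : ℝ) + 1) ^ b
      ≤ 24 / (a + b + 1) * (n : ℝ) ^ (a + b + 1) := by
  set g : ℤ → ℝ := fun t => ((|t| : ℝ) + 1) ^ (a + b)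
  have hg : ∀ t, 0 ≤ g t := fun t => by positivity
  have hwindow : ∀ s : ℤ, |s| ≤ 2 * n → ∑ r ∈ Icc (-(n : ℤ) + 1) (n - 1), g (r + s)
      ≤ ∑ t ∈ Icc (-((3 * n : ℕ) : ℤ)) (3 * n : ℕ), g t := by
    intro s hs
    rw [abs_le] at hs
    calc ∑ r ∈ Icc (-(n : ℤ) + 1) (n - 1), g (r + s)
        = ∑ t ∈ (Icc (-(n : ℤ) + 1) (n - 1)).map (addRightEmbedding s), g t := by
          rw [sum_map]; rfl
      _ ≤ ∑ t ∈ Icc (-((3 * n : ℕ) : ℤ)) (3 * n : ℕ), g t := by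
        refine sum_le_sum_of_subset_of_nonneg (fun t ht => ?_) fun t _ _ => hg t
        simp only [map_add_right_Icc, mem_Icc] at ht ⊢
        push_cast
        omega
  have hbig := sum_Icc_abs_add_one_rpow_le hab (by linarith) (T := 3 * n) (by omega)
  have h3 : ((3 * n : ℕ) : ℝ) ^ (a + b + 1) ≤ 3 * (n : ℝ) ^ (a + b + 1) := by
    push_cast
    rw [Real.mul_rpow zero_le_three (Nat.cast_nonneg n)]
    gcongr
    exact Real.rpow_le_self_of_one_le (by norm_num) (by linarith)
  have hc : 0 < a + b + 1 := by linarith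
  rw [abs_le] at hp hq
  calc ∑ r ∈ Icc (-(n : ℤ) + 1) (n - 1), ((|r| : ℝ) + 1) ^ a * ((|r + q - p| : ℝ) + 1) ^ b
      ≤ ∑ r ∈ Icc (-(n : ℤ) + 1) (n - 1), g (r + 0)
          + ∑ r ∈ Icc (-(n : ℤ) + 1) (n - 1), g (r + (q - p)) := by
        rw [← sum_add_distrib]
        refine sum_le_sum fun r _ => ?_
        simpa [g, add_sub_assoc] using
          rpow_mul_rpow_le_rpow_add_add_rpow_add (x := (|r| : ℝ) + 1)
            (y := (|r + q - p| : ℝ) + 1) (by positivity) (by positivity) ha hb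
    _ ≤ 2 * (4 / (a + b + 1) * ((3 * n : ℕ) : ℝ) ^ (a + b + 1)) := by
        linarith [hwindow 0 (by simp), hwindow (q - p) (by rw [abs_le]; constructor <;> omega)]
    _ ≤ 2 * (4 / (a + b + 1) * (3 * (n : ℝ) ^ (a + b + 1))) := by gcongr
    _ = 24 / (a + b + 1) * (n : ℝ) ^ (a + b + 1) := by ring

theorem sum_diagram_le {w a b : ℝ} (hw0 : -1 < w) (hw1 : w ≤ 0) (ha : a ≤ 0) (hb : b ≤ 0)
    (hab : -1 < a + b) {n M : ℕ} (hM : 1 ≤ M) (hMn : M ≤ n) :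
    (n : ℝ)⁻¹ * ∑ p ∈ Icc (-(M : ℤ)) M, ((|p| : ℝ) + 1) ^ w *
        ∑ q ∈ Icc (-(M : ℤ)) M, ((|q| : ℝ) + 1) ^ w *
          ∑ r ∈ Icc (-(n : ℤ) + 1) (n - 1), ((|r| : ℝ) + 1) ^ a * ((|r + q - p| : ℝ) + 1) ^ b
      ≤ 384 / ((w + 1) ^ 2 * (a + b + 1)) * ((M : ℝ) ^ (2 * (w + 1)) * (n : ℝ) ^ (a + b)) := by
  have hn : 1 ≤ n := hM.trans hMn
  have hinner : ∀ p ∈ Icc (-(M : ℤ)) M, ∀ q ∈ Icc (-(M : ℤ)) M,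
      ∑ r ∈ Icc (-(n : ℤ) + 1) (n - 1), ((|r| : ℝ) + 1) ^ a * ((|r + q - p| : ℝ) + 1) ^ b
        ≤ 24 / (a + b + 1) * (n : ℝ) ^ (a + b + 1) := by
    intro p hp q hq
    rw [mem_Icc] at hp hq
    exact sum_Icc_abs_add_one_rpow_mul_abs_add_sub_le ha hb hab hn
      (abs_le.2 ⟨by omega, by omega⟩) (abs_le.2 ⟨by omega, by omega⟩)
  have hab1 : 0 < a + b + 1 := by linarith
  have hn' : (0 : ℝ) < n := by exact_mod_cast hn
  calc _ ≤ (n : ℝ)⁻¹ * ((∑ p ∈ Icc (-(M : ℤ)) M, ((|p| : ℝ) + 1) ^ w) ^ 2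
          * (24 / (a + b + 1) * (n : ℝ) ^ (a + b + 1))) := by
        gcongr
        exact sum_mul_sum_mul_le_sq_sum_mul _ _ _ (fun p _ => by positivity) hinner
    _ ≤ (n : ℝ)⁻¹ * ((4 / (w + 1) * (M : ℝ) ^ (w + 1)) ^ 2
          * (24 / (a + b + 1) * (n : ℝ) ^ (a + b + 1))) := by
        gcongr
        exact sum_Icc_abs_add_one_rpow_le hw0 hw1 hM
    _ = 384 / ((w + 1) ^ 2 * (a + b + 1)) * ((M : ℝ) ^ (2 * (w + 1)) * (n : ℝ) ^ (a + b)) := by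
        rw [Real.rpow_add_one hn'.ne', mul_comm 2, Real.rpow_mul (Nat.cast_nonneg M), Real.rpow_two]
        field_simp
        norm_num

/-- the bound for the connected-diagram term
`γ_xε²(p)γ_xε²(q)γ_xx(r)γ_εε(r+q-p)` (Figure 4) in Part III of the proof of Lemma 1,
for `1/3 < d_x, d_ε < 1/2`. -/
theorem figure4_diagram_bound (dx dε : ℝ)
    (hdx1 : 1 / 3 < dx) (hdx2 : dx < 1 / 2) (hdε1 : 1 / 3 < dε) (hdε2 : dε < 1 / 2) :
    ∃ C : ℝ, 0 < C ∧ ∀ n M : ℕ, 1 ≤ M → M ≤ n →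
      (n : ℝ)⁻¹ *
          ∑ p ∈ Finset.Icc (-(M : ℤ)) (M : ℤ), ((|p| : ℝ) + 1) ^ (2 * (dx + dε - 1)) *
            ∑ q ∈ Finset.Icc (-(M : ℤ)) (M : ℤ), ((|q| : ℝ) + 1) ^ (2 * (dx + dε - 1)) *
              ∑ r ∈ Finset.Icc (-(n : ℤ) + 1) ((n : ℤ) - 1),
                ((|r| : ℝ) + 1) ^ (2 * dx - 1) * ((|r + q - p| : ℝ) + 1) ^ (2 * dε - 1)
        ≤ C * ((M : ℝ) ^ (4 * dx + 4 * dε - 1) * (n : ℝ)⁻¹ +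
            (M : ℝ) ^ (4 * dx + 4 * dε - 2) * (n : ℝ) ^ (2 * dx + 2 * dε - 2)) := by
  have hρ : 0 < 2 * dx + 2 * dε - 1 := by linarith
  refine ⟨384 / (2 * dx + 2 * dε - 1) ^ 3, by positivity, fun n M hM hMn => ?_⟩
  calc _ ≤ 384 / (2 * dx + 2 * dε - 1) ^ 3 *
        ((M : ℝ) ^ (4 * dx + 4 * dε - 2) * (n : ℝ) ^ (2 * dx + 2 * dε - 2)) := by
        convert sum_diagram_le (w := 2 * (dx + dε - 1)) (a := 2 * dx - 1) (b := 2 * dε - 1)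
          (by linarith) (by linarith) (by linarith) (by linarith) (by linarith) hM hMn using 3
        all_goals ring_nf
    _ ≤ _ := by
        gcongr
        exact le_add_of_nonneg_left (by positivity)
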